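/- For any three real (or complex) numbers x, y, z with pairwise differences not multiples of 2π, the function φ(t) = (1/2)·cot(t/2) satisfies φ(x−y)·φ(x−z) + φ(y−x)·φ(y−z) + φ(z−x)·φ(z−y) = −1/4. -/

import Mathlib

/-! The half-differences `(x - y)/2`, `(y - z)/2`, `(z - x)/2` sum to zero, and `cot` is odd, so
the left side is `-1/4` times `cot a cot b + cot b cot c + cot c cot a` for three angles with
`a + b + c = 0`; that sum is `1` by the addition formula for the cotangent. -/

namespace Real

theorem cot_neg (x : ℝ) : cot (-x) = -cot x := by
  rw [cot_eq_cos_div_sin, cot_eq_cos_div_sin, cos_neg, sin_neg, div_neg]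

theorem cot_mul_cot_add_cot_mul_cot_add_cot_mul_cot {a b c : ℝ} (habc : a + b + c = 0)
    (ha : sin a ≠ 0) (hb : sin b ≠ 0) (hc : sin c ≠ 0) :
    cot a * cot b + cot b * cot c + cot c * cot a = 1 := by
  obtain rfl : c = -(a + b) := by linarith
  rw [sin_neg, neg_ne_zero, sin_add] at hc
  rw [cot_neg]
  simp only [cot_eq_cos_div_sin, sin_add, cos_add]
  field_simp
  ring

end Real

/-- For any three reals `x, y, z` with pairwise differences not multiples of `2π`
(equivalently, the sines of half the differences are nonzero), the function
`φ(t) = (1/2)·cot(t/2)` satisfies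
`φ(x−y)·φ(x−z) + φ(y−x)·φ(y−z) + φ(z−x)·φ(z−y) = −1/4`. -/
theorem stmt0 (x y z : ℝ)
    (hxy : Real.sin ((x - y) / 2) ≠ 0)
    (hxz : Real.sin ((x - z) / 2) ≠ 0)
    (hyz : Real.sin ((y - z) / 2) ≠ 0) :
    ((1/2) * Real.cot ((x - y) / 2)) * ((1/2) * Real.cot ((x - z) / 2))
      + ((1/2) * Real.cot ((y - x) / 2)) * ((1/2) * Real.cot ((y - z) / 2))
      + ((1/2) * Real.cot ((z - x) / 2)) * ((1/2) * Real.cot ((z - y) / 2)) = -(1/4) := by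
  have hzx : Real.sin ((z - x) / 2) ≠ 0 := by
    rwa [show (z - x) / 2 = -((x - z) / 2) by ring, Real.sin_neg, neg_ne_zero]
  have key := Real.cot_mul_cot_add_cot_mul_cot_add_cot_mul_cot
    (show (x - y) / 2 + (y - z) / 2 + (z - x) / 2 = 0 by ring) hxy hyz hzx
  rw [show (x - z) / 2 = -((z - x) / 2) by ring, show (y - x) / 2 = -((x - y) / 2) by ring,
    show (z - y) / 2 = -((y - z) / 2) by ring]
  simp only [Real.cot_neg]
  linear_combination (-1/4 : ℝ) * key
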